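/- arXiv:1511.02904 — 7 statements merged into one kernel-verified Lean document; each statement's English description precedes it below -/
import Mathlib

section
/- Let P₁, …, Pₙ be pairwise disjoint non-empty open convex subsets of ℝ^d whose closures cover ℝ^d. Then each region Pᵢ is the solution set of at most n−1 strict linear (affine) inequalities; in particular each Pᵢ is the interior of a polyhedron with at most n−1 facets. -/
open scoped RealInnerProductSpace

section

variable {E : Type*} [NormedAddCommGroup E] [InnerProductSpace ℝ E] [CompleteSpace E]

theorem exists_inner_lt_le_on_closure_of_disjoint {s t : Set E} (hs : Convex ℝ s)
    (hso : IsOpen s) (ht : Convex ℝ t) (hst : Disjoint s t) (hsne : s.Nonempty)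
    (htne : t.Nonempty) :
    ∃ (a : E) (b : ℝ), a ≠ 0 ∧ (∀ x ∈ s, ⟪a, x⟫ < b) ∧ ∀ y ∈ closure t, b ≤ ⟪a, y⟫ := by
  obtain ⟨f, b, hfs, hft⟩ := geometric_hahn_banach_open hs hso ht hst
  obtain ⟨a, ha⟩ : ∃ a : E, ∀ x, ⟪a, x⟫ = f x :=
    ⟨_, fun _ ↦ InnerProductSpace.toDual_symm_apply⟩
  simp only [← ha] at hfs hft
  have hle_closure : closure t ⊆ {y | b ≤ ⟪a, y⟫} :=
    closure_minimal hft (isClosed_le continuous_const (continuous_const.inner continuous_id))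
  refine ⟨a, b, ?_, hfs, hle_closure⟩
  rintro rfl
  obtain ⟨x, hx⟩ := hsne
  obtain ⟨y, hy⟩ := htne
  simpa using (hfs x hx).trans_le (hft y hy)

/-- Separating `s` from each `t k` by a hyperplane cuts out `s` exactly: the resulting open
polyhedron misses every `closure (t k)`, so it lies in `closure s`, whose interior is `s`. -/
theorem Convex.exists_eq_setOf_inner_lt_of_union_closure_eq_univ {ι : Type*} [Finite ι]
    {s : Set E} {t : ι → Set E} (hs : Convex ℝ s) (hso : IsOpen s) (hsne : s.Nonempty)
    (ht : ∀ k, Convex ℝ (t k)) (htne : ∀ k, (t k).Nonempty) (hst : ∀ k, Disjoint s (t k))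
    (hcover : closure s ∪ ⋃ k, closure (t k) = Set.univ) :
    ∃ (a : ι → E) (b : ι → ℝ), (∀ k, a k ≠ 0) ∧ s = {x | ∀ k, ⟪a k, x⟫ < b k} := by
  choose a b ha hlt hle using fun k ↦
    exists_inner_lt_le_on_closure_of_disjoint hs hso (ht k) (hst k) hsne (htne k)
  refine ⟨a, b, ha, subset_antisymm (fun x hx k ↦ hlt k x hx) ?_⟩
  have hopen : IsOpen {x | ∀ k, ⟪a k, x⟫ < b k} := by
    simp only [Set.ofPred_forall]
    exact isOpen_iInter_of_finite fun k ↦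
      isOpen_lt (continuous_const.inner continuous_id) continuous_const
  have hsub : {x | ∀ k, ⟪a k, x⟫ < b k} ⊆ closure s := by
    intro x hx
    have hx' : x ∈ closure s ∪ ⋃ k, closure (t k) := hcover ▸ Set.mem_univ x
    simp only [Set.mem_union, Set.mem_iUnion] at hx'
    exact hx'.resolve_right fun ⟨k, hk⟩ ↦ (hx k).not_ge (hle k x hk)
  calc {x | ∀ k, ⟪a k, x⟫ < b k} ⊆ interior (closure s) := interior_maximal hsub hopen
    _ = s := by
      rw [hs.interior_closure_eq_interior_of_nonempty_interior (by rwa [hso.interior_eq]),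
        hso.interior_eq]

end

theorem Fin.closure_union_iUnion_closure_succAbove {X : Type*} [TopologicalSpace X] {n : ℕ}
    {P : Fin (n + 1) → Set X} (hcover : ⋃ i, closure (P i) = Set.univ) (i : Fin (n + 1)) :
    closure (P i) ∪ ⋃ k, closure (P (i.succAbove k)) = Set.univ := by
  refine Set.eq_univ_of_forall fun x ↦ ?_
  obtain ⟨j, hj⟩ := Set.mem_iUnion.1 (hcover ▸ Set.mem_univ x)
  rcases eq_or_ne j i with rfl | hji
  · exact Or.inl hj
  · obtain ⟨k, rfl⟩ := Fin.exists_succAbove_eq hji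
    exact Or.inr (Set.mem_iUnion.2 ⟨k, hj⟩)

/-- **Regions of a convex n-partition are polyhedral.**
If `P₁, …, Pₙ` are pairwise disjoint non-empty open convex subsets of `ℝ^d` whose closures
cover `ℝ^d`, then each region `Pᵢ` is the solution set of at most `n - 1` strict affine
inequalities (hence the interior of a polyhedron with at most `n - 1` facets). -/
theorem partition_regions_polyhedral
    (d n : ℕ) (P : Fin n → Set (EuclideanSpace ℝ (Fin d)))
    (hne : ∀ i, (P i).Nonempty)
    (hopen : ∀ i, IsOpen (P i))
    (hconv : ∀ i, Convex ℝ (P i))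
    (hdisj : Pairwise (Function.onFun Disjoint P))
    (hcover : (⋃ i, closure (P i)) = Set.univ) :
    ∀ i, ∃ (m : ℕ), m ≤ n - 1 ∧
      ∃ (a : Fin m → EuclideanSpace ℝ (Fin d)) (b : Fin m → ℝ),
        (∀ k, a k ≠ 0) ∧ P i = {x | ∀ k, ⟪a k, x⟫ < b k} := by
  intro i
  obtain ⟨m, rfl⟩ := Nat.exists_eq_succ_of_ne_zero i.pos.ne'
  obtain ⟨a, b, ha, hPi⟩ := (hconv i).exists_eq_setOf_inner_lt_of_union_closure_eq_univ
    (hopen i) (hne i) (fun k ↦ hconv _) (fun k ↦ hne _)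
    (fun k ↦ hdisj (Fin.succAbove_ne i k).symm)
    (Fin.closure_union_iUnion_closure_succAbove hcover i)
  exact ⟨m, by simp, a, b, ha, hPi⟩
end

section
/- If (P₁,…,Pₙ) is a convex n-partition of ℝ^d, then the sets Q̂ᵢ = {(1/√(1+‖x‖²))·(1,x) : x ∈ Pᵢ} for i = 1,…,n together with Q̂_∞ = S^d₋ (the open lower hemisphere) form a convex partition of S^d into n+1 regions: each is a non-empty open spherically convex subset of S^d, they are pairwise disjoint, and the union of their closures is S^d. -/
open scoped RealInnerProductSpace

/-- The vector `(1, x) ∈ ℝ^(d+1)` obtained from `x ∈ ℝ^d` by prepending a coordinate `1`. -/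
noncomputable def liftVec {d : ℕ} (x : EuclideanSpace ℝ (Fin d)) :
    EuclideanSpace ℝ (Fin (d + 1)) :=
  (EuclideanSpace.equiv (Fin (d + 1)) ℝ).symm (Fin.cons 1 (fun i => x i))

/-- The spherical representation map `x ↦ (1/√(1+‖x‖²)) • (1, x)`. -/
noncomputable def sphMap {d : ℕ} (x : EuclideanSpace ℝ (Fin d)) :
    EuclideanSpace ℝ (Fin (d + 1)) :=
  (Real.sqrt (1 + ‖x‖ ^ 2))⁻¹ • liftVec x

/-- A subset `Q` of the unit sphere is spherically convex if the cone over it is convex. -/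
def SphConvex {m : ℕ} (Q : Set (EuclideanSpace ℝ (Fin m))) : Prop :=
  Convex ℝ {y | ∃ q ∈ Q, ∃ l : ℝ, 0 ≤ l ∧ y = l • q}

/-!
Normalising `(1, x)` identifies `ℝ^d` with the open upper hemisphere `{v ∈ S^d | v₀ > 0}`; the
inverse is the affine chart `v ↦ (v₁/v₀, …, v_d/v₀)`, continuous there. Openness, disjointness and
covering by closures are transported along this homeomorphism, with the equator lying in the
closure of the lower hemisphere. For spherical convexity, the cone over `sphMap '' P` is the cone
over the affine image `{(1, x) | x ∈ P}` and the cone over the lower hemisphere is the cone over an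
open half-space; both are convex because the cone over a convex set is.
-/

section Cone

variable {E : Type*} [AddCommGroup E] [Module ℝ E]

def nonnegCone (Q : Set E) : Set E := {y | ∃ q ∈ Q, ∃ l : ℝ, 0 ≤ l ∧ y = l • q}

lemma nonnegCone_subset_of_pos_smul_mem {Q Q' : Set E}
    (h : ∀ q ∈ Q, ∃ c : ℝ, 0 < c ∧ c • q ∈ Q') : nonnegCone Q ⊆ nonnegCone Q' := by
  rintro _ ⟨q, hq, l, hl, rfl⟩
  obtain ⟨c, hc, hcq⟩ := h q hq
  exact ⟨c • q, hcq, l / c, div_nonneg hl hc.le, by rw [smul_smul, div_mul_cancel₀ l hc.ne']⟩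

lemma Convex.nonnegCone {s : Set E} (hs : Convex ℝ s) : Convex ℝ (nonnegCone s) := by
  rintro _ ⟨x, hx, μ, hμ, rfl⟩ _ ⟨w, hw, ν, hν, rfl⟩ a b ha hb hab
  have haμ : 0 ≤ a * μ := mul_nonneg ha hμ
  have hbν : 0 ≤ b * ν := mul_nonneg hb hν
  rcases (add_nonneg haμ hbν).eq_or_lt with h | h
  · obtain ⟨h₁, h₂⟩ := (add_eq_zero_iff_of_nonneg haμ hbν).1 h.symm
    exact ⟨x, hx, 0, le_rfl, by simp [smul_smul, h₁, h₂]⟩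
  · set t := a * μ + b * ν
    refine ⟨(a * μ / t) • x + (b * ν / t) • w,
      hs hx hw (by positivity) (by positivity) (by rw [← add_div, div_self h.ne']), t, h.le, ?_⟩
    rw [smul_add, smul_smul, smul_smul, smul_smul, smul_smul, mul_div_cancel₀ _ h.ne',
      mul_div_cancel₀ _ h.ne']

end Cone

lemma sphConvex_iff {m : ℕ} (Q : Set (EuclideanSpace ℝ (Fin m))) :
    SphConvex Q ↔ Convex ℝ (nonnegCone Q) := Iff.rfl

lemma pairwise_disjoint_option_elim {α ι : Type*} {s : Set α} {t : ι → Set α}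
    (hst : ∀ i, Disjoint s (t i)) (ht : Pairwise (Function.onFun Disjoint t)) :
    Pairwise (Function.onFun Disjoint fun o : Option ι => o.elim s t) := by
  rintro (_ | i) (_ | j) hij
  · exact absurd rfl hij
  · exact hst j
  · exact (hst i).symm
  · exact ht (fun h => hij (congrArg some h))

section SphericalRepresentation

variable {d : ℕ}

@[simp] lemma liftVec_apply_zero (x : EuclideanSpace ℝ (Fin d)) : liftVec x 0 = 1 := rfl

@[simp] lemma liftVec_apply_succ (x : EuclideanSpace ℝ (Fin d)) (i : Fin d) :
    liftVec x i.succ = x i := rfl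

lemma liftVec_ne_zero (x : EuclideanSpace ℝ (Fin d)) : liftVec x ≠ 0 := fun h => by
  simpa [h] using liftVec_apply_zero x

lemma norm_liftVec (x : EuclideanSpace ℝ (Fin d)) : ‖liftVec x‖ = √(1 + ‖x‖ ^ 2) := by
  rw [EuclideanSpace.norm_eq, EuclideanSpace.norm_eq, Fin.sum_univ_succ,
    Real.sq_sqrt (by positivity)]
  simp

lemma liftVec_add_smul (x y : EuclideanSpace ℝ (Fin d)) {a b : ℝ} (hab : a + b = 1) :
    liftVec (a • x + b • y) = a • liftVec x + b • liftVec y := by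
  ext j
  induction j using Fin.cases <;> simp [hab]

lemma Convex.image_liftVec {S : Set (EuclideanSpace ℝ (Fin d))} (hS : Convex ℝ S) :
    Convex ℝ (liftVec '' S) := by
  rintro _ ⟨x, hx, rfl⟩ _ ⟨y, hy, rfl⟩ a b ha hb hab
  exact ⟨a • x + b • y, hS hx hy ha hb hab, liftVec_add_smul x y hab⟩

lemma continuous_liftVec : Continuous (liftVec : EuclideanSpace ℝ (Fin d) → _) := by
  refine (EuclideanSpace.equiv (Fin (d + 1)) ℝ).symm.continuous.comp (continuous_pi fun j => ?_)
  induction j using Fin.cases with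
  | zero => exact continuous_const
  | succ i => exact PiLp.continuous_apply 2 _ i

lemma sphMap_eq_inv_norm_smul (x : EuclideanSpace ℝ (Fin d)) :
    sphMap x = ‖liftVec x‖⁻¹ • liftVec x := by
  rw [sphMap, norm_liftVec]

lemma norm_sphMap (x : EuclideanSpace ℝ (Fin d)) : ‖sphMap x‖ = 1 := by
  rw [sphMap_eq_inv_norm_smul]
  exact norm_smul_inv_norm (liftVec_ne_zero x)

lemma sphMap_apply_zero_pos (x : EuclideanSpace ℝ (Fin d)) : 0 < sphMap x 0 := by
  simp [sphMap_eq_inv_norm_smul, liftVec_ne_zero]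

lemma continuous_sphMap : Continuous (sphMap : EuclideanSpace ℝ (Fin d) → _) := by
  simp_rw [funext sphMap_eq_inv_norm_smul]
  exact (continuous_liftVec.norm.inv₀ fun x => norm_ne_zero_iff.2 (liftVec_ne_zero x)).smul
    continuous_liftVec

lemma nonnegCone_image_sphMap (S : Set (EuclideanSpace ℝ (Fin d))) :
    nonnegCone (sphMap '' S) = nonnegCone (liftVec '' S) := by
  have hpos (x : EuclideanSpace ℝ (Fin d)) : 0 < ‖liftVec x‖ := norm_pos_iff.2 (liftVec_ne_zero x)
  apply (nonnegCone_subset_of_pos_smul_mem _).antisymm (nonnegCone_subset_of_pos_smul_mem _)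
  · rintro _ ⟨x, hx, rfl⟩
    refine ⟨‖liftVec x‖, hpos x, x, hx, ?_⟩
    rw [sphMap_eq_inv_norm_smul, smul_smul, mul_inv_cancel₀ (hpos x).ne', one_smul]
  · rintro _ ⟨x, hx, rfl⟩
    exact ⟨‖liftVec x‖⁻¹, inv_pos.2 (hpos x), x, hx, sphMap_eq_inv_norm_smul x⟩

lemma Convex.sphConvex_image_sphMap {S : Set (EuclideanSpace ℝ (Fin d))} (hS : Convex ℝ S) :
    SphConvex (sphMap '' S) := by
  rw [sphConvex_iff, nonnegCone_image_sphMap]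
  exact hS.image_liftVec.nonnegCone

end SphericalRepresentation

section Chart

variable {d : ℕ}

noncomputable def affineChart (v : EuclideanSpace ℝ (Fin (d + 1))) : EuclideanSpace ℝ (Fin d) :=
  (EuclideanSpace.equiv (Fin d) ℝ).symm fun i => v i.succ / v 0

@[simp] lemma affineChart_apply (v : EuclideanSpace ℝ (Fin (d + 1))) (i : Fin d) :
    affineChart v i = v i.succ / v 0 := rfl

lemma affineChart_smul (v : EuclideanSpace ℝ (Fin (d + 1))) {c : ℝ} (hc : c ≠ 0) :
    affineChart (c • v) = affineChart v := by
  ext i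
  simp [mul_div_mul_left _ _ hc]

lemma affineChart_liftVec (x : EuclideanSpace ℝ (Fin d)) : affineChart (liftVec x) = x := by
  ext i
  simp

lemma affineChart_sphMap (x : EuclideanSpace ℝ (Fin d)) : affineChart (sphMap x) = x := by
  rw [sphMap_eq_inv_norm_smul, affineChart_smul _ (inv_ne_zero (norm_ne_zero_iff.2
    (liftVec_ne_zero x))), affineChart_liftVec]

lemma sphMap_injective : Function.Injective (sphMap : EuclideanSpace ℝ (Fin d) → _) :=
  Function.LeftInverse.injective affineChart_sphMap

lemma liftVec_affineChart {v : EuclideanSpace ℝ (Fin (d + 1))} (h0 : v 0 ≠ 0) :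
    liftVec (affineChart v) = (v 0)⁻¹ • v := by
  ext j
  induction j using Fin.cases <;> simp [h0, div_eq_inv_mul]

lemma sphMap_affineChart {v : EuclideanSpace ℝ (Fin (d + 1))} (h1 : ‖v‖ = 1) (h0 : 0 < v 0) :
    sphMap (affineChart v) = v := by
  rw [sphMap_eq_inv_norm_smul, liftVec_affineChart h0.ne', norm_smul, h1, mul_one,
    Real.norm_of_nonneg (inv_nonneg.2 h0.le), inv_inv, smul_smul, mul_inv_cancel₀ h0.ne',
    one_smul]

lemma continuousOn_affineChart :
    ContinuousOn (affineChart : EuclideanSpace ℝ (Fin (d + 1)) → _) {v | 0 < v 0} :=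
  (EuclideanSpace.equiv (Fin d) ℝ).symm.continuous.comp_continuousOn <|
    continuousOn_pi.2 fun i => (PiLp.continuous_apply 2 _ i.succ).continuousOn.div
      (PiLp.continuous_apply 2 _ 0).continuousOn fun _ hv => hv.ne'

lemma image_sphMap_eq (S : Set (EuclideanSpace ℝ (Fin d))) :
    sphMap '' S = ({v | 0 < v 0} ∩ affineChart ⁻¹' S) ∩ Metric.sphere 0 1 := by
  ext v
  constructor
  · rintro ⟨x, hx, rfl⟩
    exact ⟨⟨sphMap_apply_zero_pos x, by rwa [Set.mem_preimage, affineChart_sphMap]⟩,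
      mem_sphere_zero_iff_norm.2 (norm_sphMap x)⟩
  · rintro ⟨⟨h0, hS⟩, h1⟩
    exact ⟨affineChart v, hS, sphMap_affineChart (mem_sphere_zero_iff_norm.1 h1) h0⟩

lemma IsOpen.exists_image_sphMap_eq_inter_sphere {S : Set (EuclideanSpace ℝ (Fin d))}
    (hS : IsOpen S) : ∃ U, IsOpen U ∧ sphMap '' S = U ∩ Metric.sphere 0 1 :=
  ⟨_, continuousOn_affineChart.isOpen_inter_preimage
    (isOpen_lt continuous_const (PiLp.continuous_apply 2 _ 0)) hS, image_sphMap_eq S⟩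

end Chart

section LowerHemisphere

variable {m : ℕ}

def lowerHemisphere (m : ℕ) : Set (EuclideanSpace ℝ (Fin (m + 1))) := {v | ‖v‖ = 1 ∧ v 0 < 0}

lemma lowerHemisphere_nonempty : (lowerHemisphere m).Nonempty :=
  ⟨EuclideanSpace.single 0 (-1), by simp [lowerHemisphere]⟩

lemma lowerHemisphere_eq_inter_sphere :
    lowerHemisphere m = {v | v 0 < 0} ∩ Metric.sphere 0 1 := by
  ext v
  simp [lowerHemisphere, and_comm]

lemma isOpen_halfSpace_apply_zero_neg :
    IsOpen {v : EuclideanSpace ℝ (Fin (m + 1)) | v 0 < 0} :=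
  isOpen_lt (PiLp.continuous_apply 2 _ 0) continuous_const

lemma nonnegCone_lowerHemisphere :
    nonnegCone (lowerHemisphere m) = nonnegCone {v | v 0 < 0} := by
  apply (nonnegCone_subset_of_pos_smul_mem _).antisymm (nonnegCone_subset_of_pos_smul_mem _)
  · exact fun v hv => ⟨1, one_pos, by simpa using hv.2⟩
  · intro v (hv : v 0 < 0)
    have hv₀ : v ≠ 0 := fun h => by simp [h] at hv
    exact ⟨‖v‖⁻¹, inv_pos.2 (norm_pos_iff.2 hv₀), norm_smul_inv_norm hv₀, by
      simpa using mul_neg_of_pos_of_neg (inv_pos.2 (norm_pos_iff.2 hv₀)) hv⟩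

lemma sphConvex_lowerHemisphere : SphConvex (lowerHemisphere m) := by
  rw [sphConvex_iff, nonnegCone_lowerHemisphere]
  exact ((convex_Iio 0).linear_preimage (EuclideanSpace.proj (𝕜 := ℝ) (0 : Fin (m + 1))).toLinearMap).nonnegCone

lemma disjoint_lowerHemisphere_image_sphMap (S : Set (EuclideanSpace ℝ (Fin m))) :
    Disjoint (lowerHemisphere m) (sphMap '' S) := by
  rw [Set.disjoint_left]
  rintro v ⟨_, hv⟩ ⟨x, _, rfl⟩
  exact hv.not_gt (sphMap_apply_zero_pos x)

lemma mem_closure_lowerHemisphere {v : EuclideanSpace ℝ (Fin (m + 1))} (h1 : ‖v‖ = 1)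
    (h0 : v 0 ≤ 0) : v ∈ closure (lowerHemisphere m) := by
  set e₀ : EuclideanSpace ℝ (Fin (m + 1)) := EuclideanSpace.single 0 1
  set f : ℝ → EuclideanSpace ℝ (Fin (m + 1)) := fun ε => ‖v - ε • e₀‖⁻¹ • (v - ε • e₀)
  have hne : ∀ ε : ℝ, 0 < ε → v - ε • e₀ ≠ 0 := fun ε hε h => by
    have := congrArg (· 0) h
    simp [e₀] at this
    linarith
  have hmem : ∀ ε : ℝ, 0 < ε → f ε ∈ lowerHemisphere m := fun ε hε =>
    ⟨norm_smul_inv_norm (hne ε hε), by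
      simpa [f, e₀] using mul_neg_of_pos_of_neg (inv_pos.2 (norm_pos_iff.2 (hne ε hε)))
        (by linarith : v 0 - ε < 0)⟩
  have hlim : Filter.Tendsto f (nhdsWithin 0 (Set.Ioi 0)) (nhds v) := by
    have hg : Continuous fun ε : ℝ => v - ε • e₀ := by fun_prop
    have hcont : ContinuousAt f 0 :=
      (hg.continuousAt.norm.inv₀ (by simp [h1])).smul hg.continuousAt
    simpa [f, h1] using hcont.tendsto.mono_left nhdsWithin_le_nhds
  exact mem_closure_of_tendsto hlim (eventually_mem_nhdsWithin.mono hmem)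

end LowerHemisphere

lemma iUnion_closure_eq_sphere {d : ℕ} {ι : Type*} {P : ι → Set (EuclideanSpace ℝ (Fin d))}
    (hcover : ⋃ i, closure (P i) = Set.univ) :
    closure (lowerHemisphere d) ∪ ⋃ i, closure (sphMap '' P i) = Metric.sphere 0 1 := by
  apply Set.Subset.antisymm
  · refine Set.union_subset ?_ (Set.iUnion_subset fun i => ?_) <;>
      refine closure_minimal ?_ Metric.isClosed_sphere
    · exact fun v hv => mem_sphere_zero_iff_norm.2 hv.1
    · rintro _ ⟨x, _, rfl⟩
      exact mem_sphere_zero_iff_norm.2 (norm_sphMap x)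
  · intro v hv
    rw [mem_sphere_zero_iff_norm] at hv
    rcases le_or_gt (v 0) 0 with h0 | h0
    · exact Or.inl (mem_closure_lowerHemisphere hv h0)
    · obtain ⟨i, hi⟩ := Set.mem_iUnion.1 (hcover.symm ▸ Set.mem_univ (affineChart v))
      refine Or.inr (Set.mem_iUnion.2 ⟨i, image_closure_subset_closure_image continuous_sphMap ?_⟩)
      exact ⟨affineChart v, hi, sphMap_affineChart hv h0⟩

/-- **The spherical representation of a convex n-partition is a convex partition of `S^d`
into `n+1` regions.**  Given a convex `n`-partition `(P₁,…,Pₙ)` of `ℝ^d`, the images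
`Q̂ᵢ = sphMap '' Pᵢ` together with the open lower hemisphere `Q̂_∞` are non-empty, open in
the sphere, spherically convex, pairwise disjoint, and the union of their closures is `S^d`. -/
theorem spherical_representation_is_partition
    (d n : ℕ) (P : Fin n → Set (EuclideanSpace ℝ (Fin d)))
    (hne : ∀ i, (P i).Nonempty)
    (hopen : ∀ i, IsOpen (P i))
    (hconv : ∀ i, Convex ℝ (P i))
    (hdisj : Pairwise (Function.onFun Disjoint P))
    (hcover : (⋃ i, closure (P i)) = Set.univ) :
    ∀ Q : Option (Fin n) → Set (EuclideanSpace ℝ (Fin (d + 1))),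
      (Q = fun o => o.elim {v | ‖v‖ = 1 ∧ v 0 < 0} (fun i => sphMap '' P i)) →
      (∀ o, (Q o).Nonempty) ∧
      (∀ o, SphConvex (Q o)) ∧
      (∀ o, ∃ U, IsOpen U ∧ Q o = U ∩ Metric.sphere 0 1) ∧
      Pairwise (Function.onFun Disjoint Q) ∧
      (⋃ o, closure (Q o)) = Metric.sphere 0 1 := by
  rintro Q rfl
  refine ⟨?_, ?_, ?_, ?_, ?_⟩
  · rintro (_ | i)
    exacts [lowerHemisphere_nonempty, (hne i).image sphMap]
  · rintro (_ | i)
    exacts [sphConvex_lowerHemisphere, (hconv i).sphConvex_image_sphMap]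
  · rintro (_ | i)
    exacts [⟨_, isOpen_halfSpace_apply_zero_neg, lowerHemisphere_eq_inter_sphere⟩,
      (hopen i).exists_image_sphMap_eq_inter_sphere]
  · exact pairwise_disjoint_option_elim (fun i => disjoint_lowerHemisphere_image_sphMap (P i))
      fun i j hij => (Set.disjoint_image_iff sphMap_injective).2 (hdisj hij)
  · rw [Set.iUnion_option]
    exact iUnion_closure_eq_sphere hcover
end

section
/- Let (Q₁,…,Qₙ) be a convex partition of S^d, let Cᵢ = cone(closure(Qᵢ)), and for x ∈ ℝ^{d+1} let I(x) = {i : x ∈ Cᵢ} and F_{I(x)} = ⋂_{i ∈ I(x)} closure(Qᵢ). If x, x′ ∈ ℝ^{d+1} satisfy I(x) ⊊ I(x′), then F_{I(x′)} ⊊ F_{I(x)}. -/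
open scoped RealInnerProductSpace

/-- The cone over a subset of `ℝ^(d+1)`. -/
def coneOver {m : ℕ} (A : Set (EuclideanSpace ℝ (Fin m))) :
    Set (EuclideanSpace ℝ (Fin m)) :=
  {y | ∃ a ∈ A, ∃ l : ℝ, 0 ≤ l ∧ y = l • a}

/-- **Reversed inclusion of faces.**  For a convex partition `(Q₁,…,Qₙ)` of `S^d` with
cones `Cᵢ = cone(closure Qᵢ)`, index sets `I(x) = {i : x ∈ Cᵢ}` and faces
`F_{I(x)} = ⋂_{i ∈ I(x)} closure Qᵢ`: if `I(x) ⊊ I(x′)` then `F_{I(x′)} ⊊ F_{I(x)}`. -/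
theorem face_reversed_inclusion
    (d n : ℕ) (Q : Fin n → Set (EuclideanSpace ℝ (Fin (d + 1))))
    (hne : ∀ i, (Q i).Nonempty)
    (hconv : ∀ i, SphConvex (Q i))
    (hopen : ∀ i, ∃ U, IsOpen U ∧ Q i = U ∩ Metric.sphere 0 1)
    (hdisj : Pairwise (Function.onFun Disjoint Q))
    (hcover : (⋃ i, closure (Q i)) = Metric.sphere 0 1)
    (x x' : EuclideanSpace ℝ (Fin (d + 1)))
    (hss : {i | x ∈ coneOver (closure (Q i))} ⊂ {i | x' ∈ coneOver (closure (Q i))}) :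
    (⋂ i ∈ {i | x' ∈ coneOver (closure (Q i))}, closure (Q i)) ⊂
      (⋂ i ∈ {i | x ∈ coneOver (closure (Q i))}, closure (Q i)) := by
  have hclsub : ∀ i, closure (Q i) ⊆ Metric.sphere (0 : EuclideanSpace ℝ (Fin (d+1))) 1 := by
    intro i
    obtain ⟨U, hU, hQ⟩ := hopen i
    have : closure (Q i) ⊆ closure (Metric.sphere (0 : EuclideanSpace ℝ (Fin (d+1))) 1) :=
      closure_mono (by rw [hQ]; exact Set.inter_subset_right)
    rwa [Metric.isClosed_sphere.closure_eq] at this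
  have hx0 : x ≠ 0 := by
    intro h
    subst h
    refine hss.2 fun i _ => ?_
    obtain ⟨a, ha⟩ := hne i
    exact ⟨a, subset_closure ha, 0, le_refl 0, by simp⟩
  have hnx : ‖x‖ ≠ 0 := norm_ne_zero_iff.mpr hx0
  set y : EuclideanSpace ℝ (Fin (d+1)) := ‖x‖⁻¹ • x with hy
  have hyF : y ∈ ⋂ i ∈ {i | x ∈ coneOver (closure (Q i))}, closure (Q i) := by
    refine Set.mem_biInter fun i hi => ?_
    obtain ⟨a, haQ, l, hl, hxl⟩ := hi
    have ha1 : ‖a‖ = 1 := by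
      have := hclsub i haQ
      rwa [mem_sphere_zero_iff_norm] at this
    have hnxl : ‖x‖ = l := by
      rw [hxl, norm_smul, ha1, mul_one, Real.norm_eq_abs, abs_of_nonneg hl]
    have hl0 : l ≠ 0 := by
      intro h; apply hx0; rw [hxl, h, zero_smul]
    have : y = a := by
      rw [hy, hnxl, hxl, smul_smul, inv_mul_cancel₀ hl0, one_smul]
    rwa [this]
  have hxy : x = ‖x‖ • y := by
    rw [hy, smul_smul, mul_inv_cancel₀ hnx, one_smul]
  have hyn : y ∉ ⋂ i ∈ {i | x' ∈ coneOver (closure (Q i))}, closure (Q i) := by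
    intro hyF'
    obtain ⟨j, hj', hj⟩ := Set.exists_of_ssubset hss
    have hyj : y ∈ closure (Q j) := by
      have := Set.mem_iInter₂.mp hyF' j hj'
      exact this
    exact hj ⟨y, hyj, ‖x‖, norm_nonneg x, hxy⟩
  constructor
  · exact Set.biInter_subset_biInter_left hss.1
  · intro h
    exact hyn (h hyF)
end

section
/- Let μ be a finite Borel measure on ℝ^d that is positive on every non-empty open set. Define, for two n-tuples P = (P₁,…,Pₙ) and P′ = (P′₁,…,P′ₙ) of convex n-partitions of ℝ^d, d_μ(P,P′) = Σᵢ μ(Pᵢ △ P′ᵢ), where △ denotes symmetric difference. Then d_μ is a metric on the set of convex n-partitions of ℝ^d; in particular d_μ(P,P′) = 0 implies Pᵢ = P′ᵢ for all i. -/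
/-!
An open convex set `s ≠ ∅` is regular open, `interior (closure s) = s`. If two regular open sets
`A`, `B` differ by a null set for a measure charging every non-empty open set, then the open set
`A \ closure B` is null, hence empty, so `A ⊆ interior (closure B) = B`; by symmetry `A = B`.
Symmetry and the triangle inequality of `d_μ` hold term by term.
-/

open MeasureTheory

/-- A convex `n`-partition of `ℝ^d`: non-empty open convex pairwise disjoint regions whose
closures cover `ℝ^d`. -/
def IsConvexPartition {d n : ℕ} (P : Fin n → Set (EuclideanSpace ℝ (Fin d))) : Prop :=
  (∀ i, (P i).Nonempty) ∧ (∀ i, IsOpen (P i)) ∧ (∀ i, Convex ℝ (P i)) ∧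
    Pairwise (Function.onFun Disjoint P) ∧ (⋃ i, closure (P i)) = Set.univ

open scoped symmDiff

section RegularOpen

variable {X : Type*} [TopologicalSpace X] [MeasurableSpace X] {μ : Measure X}
  [μ.IsOpenPosMeasure] {A B : Set X}

theorem subset_of_measure_diff_eq_zero (hA : IsOpen A) (hB : interior (closure B) = B)
    (h : μ (A \ B) = 0) : A ⊆ B := by
  have hA_diff_closure : A \ closure B = ∅ :=
    (hA.sdiff isClosed_closure).eq_empty_of_measure_zero
      (measure_mono_null (Set.sdiff_subset_sdiff_right subset_closure) h)
  exact hB ▸ hA.subset_interior_iff.mpr (Set.sdiff_eq_empty.mp hA_diff_closure)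

theorem eq_of_measure_symmDiff_eq_zero (hA : interior (closure A) = A)
    (hB : interior (closure B) = B) (h : μ (A ∆ B) = 0) : A = B := by
  have hA_open : IsOpen A := hA ▸ isOpen_interior
  have hB_open : IsOpen B := hB ▸ isOpen_interior
  rw [Set.symmDiff_def, measure_union_null_iff] at h
  exact subset_antisymm (subset_of_measure_diff_eq_zero hA_open hB h.1)
    (subset_of_measure_diff_eq_zero hB_open hA h.2)

end RegularOpen

theorem Convex.interior_closure_eq_of_isOpen {𝕜 E : Type*} [Field 𝕜] [LinearOrder 𝕜]
    [IsStrictOrderedRing 𝕜] [AddCommGroup E] [Module 𝕜 E] [TopologicalSpace E]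
    [IsTopologicalAddGroup E] [TopologicalSpace 𝕜] [OrderTopology 𝕜] [ContinuousSMul 𝕜 E]
    {s : Set E} (hs : Convex 𝕜 s) (ho : IsOpen s) (hne : s.Nonempty) :
    interior (closure s) = s := by
  rw [hs.interior_closure_eq_interior_of_nonempty_interior (by rwa [ho.interior_eq]),
    ho.interior_eq]

theorem IsConvexPartition.interior_closure_eq {d n : ℕ}
    {P : Fin n → Set (EuclideanSpace ℝ (Fin d))} (hP : IsConvexPartition P) (i : Fin n) :
    interior (closure (P i)) = P i :=
  (hP.2.2.1 i).interior_closure_eq_of_isOpen (hP.2.1 i) (hP.1 i)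

section PartitionDist

variable {ι α : Type*} [Fintype ι] [MeasurableSpace α] (μ : Measure α)

/-- The paper's `d_μ`. -/
def partitionDist (P Q : ι → Set α) : ℝ :=
  ∑ i, μ.real (P i ∆ Q i)

theorem partitionDist_comm (P Q : ι → Set α) : partitionDist μ P Q = partitionDist μ Q P := by
  simp only [partitionDist, symmDiff_comm]

variable [IsFiniteMeasure μ]

theorem partitionDist_triangle (P Q R : ι → Set α) :
    partitionDist μ P R ≤ partitionDist μ P Q + partitionDist μ Q R := by
  rw [partitionDist, partitionDist, partitionDist, ← Finset.sum_add_distrib]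
  exact Finset.sum_le_sum fun i _ => measureReal_symmDiff_le (R i)

theorem partitionDist_eq_zero_iff (P Q : ι → Set α) :
    partitionDist μ P Q = 0 ↔ ∀ i, μ (P i ∆ Q i) = 0 := by
  simp only [partitionDist, Finset.sum_eq_zero_iff_of_nonneg fun _ _ => measureReal_nonneg,
    Finset.mem_univ, true_implies]
  exact forall_congr' fun i => measureReal_eq_zero_iff

end PartitionDist

/-- **`d_μ` is a metric on the space of convex `n`-partitions.**  For a finite Borel
measure `μ` positive on non-empty open sets, `d_μ(P,P′) = Σᵢ μ(Pᵢ △ P′ᵢ)` is symmetric,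
satisfies the triangle inequality, and vanishes exactly when the partitions coincide. -/
theorem dmu_is_metric
    (d n : ℕ) (μ : Measure (EuclideanSpace ℝ (Fin d))) [IsFiniteMeasure μ]
    (hpos : ∀ U : Set (EuclideanSpace ℝ (Fin d)), IsOpen U → U.Nonempty → 0 < μ U) :
    ∀ P P' P'' : Fin n → Set (EuclideanSpace ℝ (Fin d)),
      IsConvexPartition P → IsConvexPartition P' → IsConvexPartition P'' →
      ((∑ i, (μ (symmDiff (P i) (P' i))).toReal = 0 ↔ P = P') ∧
       (∑ i, (μ (symmDiff (P i) (P' i))).toReal =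
          ∑ i, (μ (symmDiff (P' i) (P i))).toReal) ∧
       (∑ i, (μ (symmDiff (P i) (P'' i))).toReal ≤
          ∑ i, (μ (symmDiff (P i) (P' i))).toReal +
          ∑ i, (μ (symmDiff (P' i) (P'' i))).toReal)) := by
  intro P P' P'' hP hP' _
  have : μ.IsOpenPosMeasure := ⟨fun U hU hne => (hpos U hU hne).ne'⟩
  refine ⟨?_, partitionDist_comm μ P P', partitionDist_triangle μ P P' P''⟩
  change partitionDist μ P P' = 0 ↔ P = P'
  rw [partitionDist_eq_zero_iff]
  refine ⟨fun h => funext fun i => ?_, by rintro rfl i; simp⟩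
  exact eq_of_measure_symmDiff_eq_zero (hP.interior_closure_eq i) (hP'.interior_closure_eq i) (h i)
end

section
/- The space C(ℝ^d, ≤ n) of possibly non-proper convex n-partitions of ℝ^d, equipped with the metric d_μ(P,P′) = Σᵢ μ(Pᵢ △ P′ᵢ) for μ the pushforward of spherical measure under the hemisphere embedding, is a compact metric space, being the continuous image of a closed (hence compact) subset of (S^d)^{binom(n,2)}. -/
/-!
Separate each pair of pieces `P i`, `P j` (`i < j`) by Hahn–Banach with a unit affine functional,
negative on `P i` and positive on `P j`. Then `P i` is exactly the cell where all functionals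
`c i j` (`j ≠ i`) are negative, because an open convex set is the interior of its closure and
the closures cover. The matrices of unit normals form a compact space, so along a subsequence
they converge. Off the limit hyperplanes, a null set, membership in the cells eventually agrees
with membership in the limit cells; this gives convergence in `d_μ`, and shows that the limit
cells cover almost everything, hence (as `μ` charges open sets) their closures cover `ℝ^d`.
-/

open MeasureTheory Filter
open scoped RealInnerProductSpace

/-- A possibly non-proper convex `n`-partition of `ℝ^d`: open convex pairwise disjoint
(possibly empty) regions whose closures cover `ℝ^d`. -/
def IsConvexPartitionLE {d n : ℕ} (P : Fin n → Set (EuclideanSpace ℝ (Fin d))) : Prop :=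
  (∀ i, IsOpen (P i)) ∧ (∀ i, Convex ℝ (P i)) ∧
    Pairwise (Function.onFun Disjoint P) ∧ (⋃ i, closure (P i)) = Set.univ

open Set Topology

section UnitSkew

variable {ι F : Type*} [NormedAddCommGroup F]

/-- The paper's parameter space `(S^d)^(n choose 2)`: one unit normal per unordered pair,
stored in both orientations (the diagonal is irrelevant). -/
def IsUnitSkew (c : ι → ι → F) : Prop :=
  (∀ i j, ‖c i j‖ = 1) ∧ ∀ i j, i ≠ j → c j i = -c i j

lemma isCompact_setOf_isUnitSkew [ProperSpace F] :
    IsCompact {c : ι → ι → F | IsUnitSkew c} := by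
  have hunit : IsCompact (univ.pi fun _ : ι => univ.pi fun _ : ι => Metric.sphere (0 : F) 1) :=
    isCompact_univ_pi fun _ => isCompact_univ_pi fun _ => isCompact_sphere _ _
  have hskew : IsClosed {c : ι → ι → F | ∀ i j, i ≠ j → c j i = -c i j} := by
    simp only [ofPred_forall]
    exact isClosed_iInter fun i => isClosed_iInter fun j => isClosed_iInter fun _ =>
      isClosed_eq (by fun_prop) (by fun_prop)
  convert hunit.inter_right hskew using 1
  ext c
  simp [IsUnitSkew]

end UnitSkew

section Cells

variable {E : Type*} [NormedAddCommGroup E] [InnerProductSpace ℝ E]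

/-- `p = (b, a)` encodes `x ↦ b + ⟪a, x⟫`, the paper's `c · (1, x)`; normals are normalised in
the sup norm of `ℝ × E` rather than on the Euclidean sphere `S^d`. -/
def affineEval (p : ℝ × E) (x : E) : ℝ := p.1 + ⟪p.2, x⟫

lemma affineEval_neg (p : ℝ × E) (x : E) : affineEval (-p) x = -affineEval p x := by
  simp only [affineEval, Prod.fst_neg, Prod.snd_neg, inner_neg_left]; ring

lemma affineEval_smul (r : ℝ) (p : ℝ × E) (x : E) :
    affineEval (r • p) x = r * affineEval p x := by
  simp only [affineEval, Prod.smul_fst, Prod.smul_snd, real_inner_smul_left, smul_eq_mul]; ring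

lemma continuous_affineEval (p : ℝ × E) : Continuous (affineEval p) := by
  unfold affineEval; fun_prop

lemma continuous_affineEval_apply (x : E) : Continuous fun p : ℝ × E => affineEval p x := by
  unfold affineEval; fun_prop

lemma exists_norm_eq_one_separating [CompleteSpace E] {s t : Set E} (hs : Convex ℝ s)
    (hso : IsOpen s) (ht : Convex ℝ t) (hto : IsOpen t) (hst : Disjoint s t) :
    ∃ p : ℝ × E, ‖p‖ = 1 ∧ (∀ x ∈ s, affineEval p x < 0) ∧ ∀ x ∈ t, 0 < affineEval p x := by
  obtain ⟨f, u, hfs, hft⟩ := geometric_hahn_banach_open_open hs hso ht hto hst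
  set p : ℝ × E := (-u, (InnerProductSpace.toDual ℝ E).symm f)
  have hp : ∀ x, affineEval p x = f x - u := fun x => by
    simp only [affineEval, p, InnerProductSpace.toDual_symm_apply]; ring
  have hps : ∀ x ∈ s, affineEval p x < 0 := fun x hx => by linarith [hp x, hfs x hx]
  have hpt : ∀ x ∈ t, 0 < affineEval p x := fun x hx => by linarith [hp x, hft x hx]
  by_cases hp0 : p = 0
  · exact ⟨(1, 0), by simp [Prod.norm_def],
      fun x hx => absurd (hps x hx) (by simp [hp0, affineEval]),
      fun x hx => absurd (hpt x hx) (by simp [hp0, affineEval])⟩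
  · have hnorm : 0 < ‖p‖⁻¹ := inv_pos.2 (norm_pos_iff.2 hp0)
    refine ⟨‖p‖⁻¹ • p, norm_smul_inv_norm hp0, fun x hx => ?_, fun x hx => ?_⟩
    · rw [affineEval_smul]; exact mul_neg_of_pos_of_neg hnorm (hps x hx)
    · rw [affineEval_smul]; exact mul_pos hnorm (hpt x hx)

variable {ι : Type*}

lemma ae_forall_affineEval_ne_zero [Countable ι] [MeasurableSpace E] {μ : Measure E}
    (hplane : ∀ (a : E) (b : ℝ), a ≠ 0 → μ {x | ⟪a, x⟫ = b} = 0)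
    {c : ι → ι → ℝ × E} (hc : IsUnitSkew c) : ∀ᵐ x ∂μ, ∀ i j, affineEval (c i j) x ≠ 0 := by
  refine ae_all_iff.2 fun i => ae_all_iff.2 fun j => ?_
  rw [ae_iff]
  simp only [ne_eq, not_not]
  by_cases ha : (c i j).2 = 0
  · have hb : (c i j).1 ≠ 0 := fun hb => by simpa [Prod.norm_def, ha, hb] using hc.1 i j
    simp [affineEval, ha, hb]
  · convert hplane _ (-(c i j).1) ha using 2
    ext x
    exact add_eq_zero_iff_eq_neg'

/-- The cell `π(c)ᵢ` of the paper. -/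
def cell (c : ι → ι → ℝ × E) (i : ι) : Set E := {x | ∀ j ≠ i, affineEval (c i j) x < 0}

lemma convex_cell (c : ι → ι → ℝ × E) (i : ι) : Convex ℝ (cell c i) := by
  simp only [cell, ofPred_forall, affineEval, lt_neg_iff_add_neg'.symm]
  exact convex_iInter fun j => convex_iInter fun _ =>
    convex_halfSpace_lt (innerₛₗ ℝ (c i j).2).isLinear _

lemma pairwise_disjoint_cell {c : ι → ι → ℝ × E} (hc : ∀ i j, i ≠ j → c j i = -c i j) :
    Pairwise (Function.onFun Disjoint (cell c)) := by
  intro i j hij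
  refine disjoint_left.2 fun x hxi hxj => ?_
  have hi := hxi j hij.symm
  have hj := hxj i hij
  rw [hc i j hij, affineEval_neg] at hj
  linarith

lemma exists_isUnitSkew_subset_cell [CompleteSpace E] [LinearOrder ι] {P : ι → Set E}
    (hconv : ∀ i, Convex ℝ (P i)) (hopen : ∀ i, IsOpen (P i))
    (hdisj : Pairwise (Function.onFun Disjoint P)) :
    ∃ c : ι → ι → ℝ × E, IsUnitSkew c ∧ ∀ i, P i ⊆ cell c i := by
  have hsep : ∀ i j, i < j → ∃ p : ℝ × E, ‖p‖ = 1 ∧ (∀ x ∈ P i, affineEval p x < 0) ∧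
      ∀ x ∈ P j, 0 < affineEval p x := fun i j hij =>
    exists_norm_eq_one_separating (hconv i) (hopen i) (hconv j) (hopen j) (hdisj hij.ne)
  choose s hs hsi hsj using hsep
  let c : ι → ι → ℝ × E := fun i j =>
    if hij : i < j then s i j hij else if hji : j < i then -s j i hji else (1, 0)
  refine ⟨c, ⟨fun i j => ?_, fun i j hij => ?_⟩, fun i x hx j hji => ?_⟩
  · unfold c; split_ifs <;> simp [hs, Prod.norm_def]
  · rcases hij.lt_or_gt with h | h <;> simp [c, h, h.not_gt]
  · rcases hji.lt_or_gt with h | h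
    · simp only [c, dif_neg h.not_gt, dif_pos h, affineEval_neg]
      linarith [hsj j i h x hx]
    · simp only [c, dif_pos h]
      exact hsi i j h x hx

variable [Finite ι]

lemma isOpen_cell (c : ι → ι → ℝ × E) (i : ι) : IsOpen (cell c i) := by
  simp only [cell, ofPred_forall]
  exact isOpen_iInter_of_finite fun j => isOpen_iInter_of_finite fun _ =>
    isOpen_lt (continuous_affineEval _) continuous_const

lemma frontier_cell_subset (c : ι → ι → ℝ × E) (i : ι) :
    frontier (cell c i) ⊆ {x | ∃ j ≠ i, affineEval (c i j) x = 0} := by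
  intro x ⟨hcl, hint⟩
  rw [(isOpen_cell c i).interior_eq] at hint
  obtain ⟨j, hj, hge⟩ : ∃ j ≠ i, 0 ≤ affineEval (c i j) x := by simpa [cell] using hint
  have hsub : cell c i ⊆ {y | affineEval (c i j) y < 0} := fun y hy => hy j hj
  have hle : affineEval (c i j) x ≤ 0 :=
    closure_lt_subset_le (continuous_affineEval _) continuous_const (closure_mono hsub hcl)
  exact ⟨j, hj, le_antisymm hle hge⟩

lemma eventually_mem_cell_iff {α : Type*} {l : Filter α} {c : α → ι → ι → ℝ × E}
    {c₀ : ι → ι → ℝ × E} (hlim : Tendsto c l (𝓝 c₀)) {x : E}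
    (hx : ∀ i j, affineEval (c₀ i j) x ≠ 0) :
    ∀ᶠ k in l, ∀ i, (x ∈ cell (c k) i ↔ x ∈ cell c₀ i) := by
  have hev : ∀ i j, ∀ᶠ k in l, (affineEval (c k i j) x < 0 ↔ affineEval (c₀ i j) x < 0) := by
    intro i j
    have ht : Tendsto (fun k => affineEval (c k i j) x) l (𝓝 (affineEval (c₀ i j) x)) :=
      ((continuous_affineEval_apply x).tendsto _).comp ((hlim.apply_nhds i).apply_nhds j)
    rcases (hx i j).lt_or_gt with h | h
    · exact (ht.eventually_lt_const h).mono fun k hk => iff_of_true hk h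
    · exact (ht.eventually_const_lt h).mono fun k hk => iff_of_false hk.not_gt h.not_gt
  exact (eventually_all.2 fun i => eventually_all.2 (hev i)).mono fun k hk i =>
    forall_congr' fun j => imp_congr_right fun _ => hk i j

end Cells

lemma tendsto_measure_symmDiff_of_ae_eventually_mem_iff {X α : Type*} [MeasurableSpace X]
    {μ : Measure X} [IsFiniteMeasure μ] {l : Filter α} [l.IsCountablyGenerated]
    {s : α → Set X} {t : Set X} (hs : ∀ k, MeasurableSet (s k)) (ht : MeasurableSet t)
    (h : ∀ᵐ x ∂μ, ∀ᶠ k in l, (x ∈ s k ↔ x ∈ t)) :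
    Tendsto (fun k => μ (symmDiff (s k) t)) l (𝓝 0) := by
  simpa using tendsto_measure_of_ae_tendsto_indicator_of_isFiniteMeasure l MeasurableSet.empty
    (fun k => (hs k).symmDiff ht)
    (h.mono fun x hx => hx.mono fun k hk => by simp [mem_symmDiff, hk])

namespace IsConvexPartitionLE

variable {d n : ℕ} {P : Fin n → Set (EuclideanSpace ℝ (Fin d))}

lemma cell_eq (hP : IsConvexPartitionLE P) {c : Fin n → Fin n → ℝ × EuclideanSpace ℝ (Fin d)}
    (hc : ∀ i j, i ≠ j → c j i = -c i j) (hsub : ∀ i, P i ⊆ cell c i) (i : Fin n) :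
    cell c i = P i := by
  have hcl : cell c i ⊆ closure (P i) := by
    intro x hx
    obtain ⟨j, hj⟩ := mem_iUnion.1 (hP.2.2.2 ▸ mem_univ x)
    rcases eq_or_ne j i with rfl | hji
    · exact hj
    have hpos : closure (P j) ⊆ {y | 0 ≤ affineEval (c i j) y} := by
      refine closure_minimal (fun y hy => ?_)
        (isClosed_le continuous_const (continuous_affineEval _))
      have := hsub j hy i hji.symm
      rw [hc i j hji.symm, affineEval_neg] at this
      exact (neg_neg_iff_pos.1 this).le
    exact absurd (hx j hji) (not_lt.2 (hpos hj))
  refine ((interior_maximal hcl (isOpen_cell c i)).trans ?_).antisymm (hsub i)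
  rcases (P i).eq_empty_or_nonempty with h | h
  · simp [h]
  · rw [(hP.2.1 i).interior_closure_eq_interior_of_nonempty_interior
      ((hP.1 i).interior_eq.symm ▸ h), (hP.1 i).interior_eq]

lemma exists_isUnitSkew_cell_eq (hP : IsConvexPartitionLE P) :
    ∃ c : Fin n → Fin n → ℝ × EuclideanSpace ℝ (Fin d), IsUnitSkew c ∧ ∀ i, cell c i = P i :=
  let ⟨c, hc, hsub⟩ := exists_isUnitSkew_subset_cell hP.2.1 hP.1 hP.2.2.1
  ⟨c, hc, hP.cell_eq hc.2 hsub⟩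

lemma ae_exists_mem {μ : Measure (EuclideanSpace ℝ (Fin d))}
    (hplane : ∀ (a : EuclideanSpace ℝ (Fin d)) (b : ℝ), a ≠ 0 → μ {x | ⟪a, x⟫ = b} = 0)
    (hP : IsConvexPartitionLE P) : ∀ᵐ x ∂μ, ∃ i, x ∈ P i := by
  obtain ⟨c, hc, hcP⟩ := hP.exists_isUnitSkew_cell_eq
  filter_upwards [ae_forall_affineEval_ne_zero hplane hc] with x hx
  obtain ⟨i, hi⟩ := mem_iUnion.1 (hP.2.2.2 ▸ mem_univ x)
  refine ⟨i, by_contra fun hxi => ?_⟩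
  rw [← hcP i] at hi hxi
  obtain ⟨j, -, hj⟩ := frontier_cell_subset c i ⟨hi, by rwa [(isOpen_cell c i).interior_eq]⟩
  exact hx i j hj

end IsConvexPartitionLE

lemma isConvexPartitionLE_cell {d n : ℕ} {c : Fin n → Fin n → ℝ × EuclideanSpace ℝ (Fin d)}
    (hc : ∀ i j, i ≠ j → c j i = -c i j) (hcover : ⋃ i, closure (cell c i) = univ) :
    IsConvexPartitionLE (cell c) :=
  ⟨isOpen_cell c, convex_cell c, pairwise_disjoint_cell hc, hcover⟩

/-- **Compactness of `C(ℝ^d, ≤ n)`.**  With respect to the metric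
`d_μ(P,P′) = Σᵢ μ(Pᵢ △ P′ᵢ)` — where `μ` is a finite measure positive on non-empty open
sets and vanishing on affine hyperplanes, as is the pushforward of the spherical measure
under the hemisphere embedding — the space of possibly non-proper convex `n`-partitions
of `ℝ^d` is (sequentially) compact: every sequence of partitions has a subsequence
converging in `d_μ` to a partition. -/
theorem partition_space_compact
    (d n : ℕ) (μ : Measure (EuclideanSpace ℝ (Fin d))) [IsFiniteMeasure μ]
    (hpos : ∀ U : Set (EuclideanSpace ℝ (Fin d)), IsOpen U → U.Nonempty → 0 < μ U)
    (hplane : ∀ (a : EuclideanSpace ℝ (Fin d)) (b : ℝ), a ≠ 0 →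
      μ {x | ⟪a, x⟫ = b} = 0)
    (P : ℕ → Fin n → Set (EuclideanSpace ℝ (Fin d)))
    (hP : ∀ k, IsConvexPartitionLE (P k)) :
    ∃ φ : ℕ → ℕ, StrictMono φ ∧
      ∃ Q : Fin n → Set (EuclideanSpace ℝ (Fin d)), IsConvexPartitionLE Q ∧
        Tendsto (fun k => ∑ i, (μ (symmDiff (P (φ k) i) (Q i))).toReal)
          atTop (nhds 0) := by
  have : μ.IsOpenPosMeasure := ⟨fun U hU hne => (hpos U hU hne).ne'⟩
  choose c hc hcP using fun k => (hP k).exists_isUnitSkew_cell_eq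
  obtain ⟨c₀, hc₀, φ, hφ, hlim⟩ := isCompact_setOf_isUnitSkew.tendsto_subseq (x := c) hc
  have hstable : ∀ᵐ x ∂μ, ∀ᶠ k in atTop, ∀ i, (x ∈ P (φ k) i ↔ x ∈ cell c₀ i) := by
    filter_upwards [ae_forall_affineEval_ne_zero hplane hc₀] with x hx
    simpa only [Function.comp_apply, hcP] using eventually_mem_cell_iff hlim hx
  have hcover : ∀ᵐ x ∂μ, ∃ i, x ∈ cell c₀ i := by
    filter_upwards [hstable, ae_all_iff.2 fun k => (hP (φ k)).ae_exists_mem hplane]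
      with x hx hxP
    obtain ⟨k, hk⟩ := hx.exists
    obtain ⟨i, hi⟩ := hxP k
    exact ⟨i, (hk i).1 hi⟩
  refine ⟨φ, hφ, cell c₀, isConvexPartitionLE_cell hc₀.2 ?_, ?_⟩
  · rw [← closure_iUnion_of_finite]
    simpa only [← mem_iUnion, ofPred_mem_eq] using (Measure.dense_of_ae hcover).closure_eq
  · have hsymm i := tendsto_measure_symmDiff_of_ae_eventually_mem_iff
      (fun k => (hP (φ k)).1 i |>.measurableSet) (isOpen_cell c₀ i).measurableSet
      (hstable.mono fun x hx => hx.mono fun k hk => hk i)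
    simpa using tendsto_finsetSum Finset.univ fun i _ =>
      (ENNReal.tendsto_toReal ENNReal.zero_ne_top).comp (hsymm i)
end

section
/- Let G₀ ⊂ G₁ ⊂ … ⊂ G_d be subsets of S^d ⊂ ℝ^{d+1} such that each Gₖ spans a (k+1)-dimensional linear subspace Lₖ of ℝ^{d+1} with L₀ ⊂ L₁ ⊂ … ⊂ L_d, and such that each Gₖ lies in a fixed closed halfspace of Lₖ bounded by L_{k−1} (for k ≥ 1). Then for any two choices of linearly independent tuples (x₀,…,x_d) and (x′₀,…,x′_d) with xᵢ, x′ᵢ ∈ Gᵢ, the determinants det(x₀,…,x_d) and det(x′₀,…,x′_d) have the same (non-zero) sign. -/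
open scoped RealInnerProductSpace

/-!
Let `x`, `x'` be two transversals of the flag. Both are bases, and the initial segments
`x₀, …, xₖ` and `x'₀, …, x'ₖ` both span `Lₖ`, so the matrix expressing `x'` in the basis `x` is
triangular. Its diagonal is positive: `x'₀ = x₀`, and for `k ≥ 1` the normal `bₖ` of the halfspace
pairs strictly positively with both `xₖ` and `x'ₖ` (it lies in `Lₖ`, is orthogonal to `L_{k-1}`,
and is nonzero), while `⟪bₖ, x'ₖ⟫` is the `k`-th diagonal entry times `⟪bₖ, xₖ⟫`. So
`det x' = c · det x` with `c > 0` the determinant of the change of basis.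
-/

open Submodule Set

theorem span_image_Iic_eq_span_flag {K V : Type*} [DivisionRing K] [AddCommGroup V]
    [Module K V] {n : ℕ} {G : Fin n → Set V} (hmono : Monotone G)
    (hdim : ∀ k, Module.finrank K (span K (G k)) = (k : ℕ) + 1)
    {z : Fin n → V} (hz : ∀ i, z i ∈ G i) (hli : LinearIndependent K z) (k : Fin n) :
    span K (z '' Iic k) = span K (G k) := by
  have hle : span K (z '' Iic k) ≤ span K (G k) :=
    span_le.2 <| image_subset_iff.2 fun j hj => subset_span (hmono hj (hz j))
  have : FiniteDimensional K (span K (G k)) :=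
    Module.finite_of_finrank_pos (by rw [hdim k]; exact k.val.succ_pos)
  refine eq_of_le_of_finrank_le hle ?_
  have hli_Iic : LinearIndependent K fun j : Iic k => z j := hli.comp _ Subtype.val_injective
  rw [image_eq_range, finrank_span_eq_card hli_Iic, hdim k, Fintype.card_Iic, Fin.card_Iic]

theorem Module.Basis.det_pos_of_mem_span_image_Iic {K V ι : Type*} [Field K] [LinearOrder K]
    [IsStrictOrderedRing K] [AddCommGroup V] [Module K V] [Fintype ι] [LinearOrder ι]
    (B : Basis ι K V) {v : ι → V}
    (hv : ∀ i, v i ∈ span K (B '' Iic i)) (hdiag : ∀ i, 0 < B.repr (v i) i) :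
    0 < B.det v := by
  have htri : (B.toMatrix v).IsUpperTriangular := fun i j hji => by
    rw [Module.Basis.toMatrix_apply, ← Finsupp.notMem_support_iff]
    exact fun hi => (not_le.2 hji) (B.mem_span_image.1 (hv j) hi)
  rw [Module.Basis.det_apply, Matrix.det_of_isUpperTriangular htri]
  exact Finset.prod_pos fun i _ => hdiag i

section InnerProduct

variable {E ι : Type*} [NormedAddCommGroup E] [InnerProductSpace ℝ E] [LinearOrder ι]

theorem exists_inner_ne_zero_of_mem_span {s : Set E} {b : E} (hb : b ∈ span ℝ s) (hb0 : b ≠ 0) :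
    ∃ v ∈ s, ⟪b, v⟫ ≠ 0 := by
  by_contra! h
  have hperp : span ℝ s ≤ (ℝ ∙ b)ᗮ :=
    span_le.2 fun v hv => mem_orthogonal_singleton_iff_inner_right.2 (h v hv)
  exact hb0 (inner_self_eq_zero.1 (mem_orthogonal_singleton_iff_inner_right.1 (hperp hb)))

theorem inner_pos_of_mem_span_image_Iic {z : ι → E} {i : ι} {b : E}
    (hb : b ∈ span ℝ (z '' Iic i)) (hb0 : b ≠ 0) (hperp : ∀ j < i, ⟪b, z j⟫ = 0)
    (hnn : 0 ≤ ⟪b, z i⟫) : 0 < ⟪b, z i⟫ := by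
  refine hnn.lt_of_ne' ?_
  obtain ⟨_, ⟨j, hj, rfl⟩, hne⟩ := exists_inner_ne_zero_of_mem_span hb hb0
  obtain hlt | rfl := (show j ≤ i from hj).lt_or_eq
  · exact absurd (hperp j hlt) hne
  · exact hne

theorem Module.Basis.inner_eq_repr_mul_of_mem_span_image_Iic [Fintype ι] (B : Basis ι ℝ E)
    {v b : E} {i : ι} (hv : v ∈ span ℝ (B '' Iic i)) (hperp : ∀ j < i, ⟪b, B j⟫ = 0) :
    ⟪b, v⟫ = B.repr v i * ⟪b, B i⟫ := by
  conv_lhs => rw [← B.sum_repr v]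
  rw [inner_sum, Finset.sum_eq_single i]
  · exact real_inner_smul_right _ _ _
  · intro j _ hji
    rw [real_inner_smul_right]
    obtain hlt | hgt := hji.lt_or_gt
    · rw [hperp j hlt, mul_zero]
    · rw [Finsupp.notMem_support_iff.1 fun hj => (not_le.2 hgt) (B.mem_span_image.1 hv hj),
        zero_mul]
  · exact fun h => absurd (Finset.mem_univ i) h

theorem Module.Basis.repr_pos_of_inner_pos [Fintype ι] (B : Basis ι ℝ E) {v b : E} {i : ι}
    (hv : v ∈ span ℝ (B '' Iic i)) (hperp : ∀ j < i, ⟪b, B j⟫ = 0) (hBi : 0 < ⟪b, B i⟫)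
    (hvi : 0 < ⟪b, v⟫) : 0 < B.repr v i := by
  rw [B.inner_eq_repr_mul_of_mem_span_image_Iic hv hperp] at hvi
  exact pos_of_mul_pos_left hvi hBi.le

end InnerProduct

section Flag

variable {E : Type*} [NormedAddCommGroup E] [InnerProductSpace ℝ E] {n : ℕ}

theorem inner_pos_of_flag {G : Fin n → Set E} (hmono : Monotone G)
    (hdim : ∀ k, Module.finrank ℝ (span ℝ (G k)) = (k : ℕ) + 1) {i : Fin n} {b : E}
    (hb : b ∈ span ℝ (G i)) (hb0 : b ≠ 0) (hperp : ∀ j < i, ∀ v ∈ G j, ⟪b, v⟫ = 0)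
    (hnn : ∀ v ∈ G i, 0 ≤ ⟪b, v⟫) {z : Fin n → E} (hz : ∀ i, z i ∈ G i)
    (hli : LinearIndependent ℝ z) : 0 < ⟪b, z i⟫ := by
  rw [← span_image_Iic_eq_span_flag hmono hdim hz hli] at hb
  exact inner_pos_of_mem_span_image_Iic hb hb0 (fun j hj => hperp j hj _ (hz j)) (hnn _ (hz i))

theorem Module.Basis.det_pos_of_flag {G : Fin (n + 1) → Set E} (hmono : Monotone G)
    (h0 : ∀ v w, v ∈ G 0 → w ∈ G 0 → v = w)
    (hdim : ∀ k, Module.finrank ℝ (span ℝ (G k)) = (k : ℕ) + 1)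
    (hhalf : ∀ k : Fin n, ∃ b : E, b ∈ span ℝ (G k.succ) ∧ b ≠ 0 ∧
      (∀ y ∈ span ℝ (G k.castSucc), ⟪b, y⟫ = 0) ∧ (∀ v ∈ G k.succ, 0 ≤ ⟪b, v⟫))
    (B B' : Basis (Fin (n + 1)) ℝ E) (hB : ∀ i, B i ∈ G i) (hB' : ∀ i, B' i ∈ G i) :
    0 < B.det B' := by
  have hmem : ∀ i, B' i ∈ span ℝ (B '' Iic i) := fun i => by
    rw [span_image_Iic_eq_span_flag hmono hdim hB B.linearIndependent,
      ← span_image_Iic_eq_span_flag hmono hdim hB' B'.linearIndependent]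
    exact subset_span (mem_image_of_mem B' (mem_Iic.2 le_rfl))
  refine B.det_pos_of_mem_span_image_Iic hmem fun i => ?_
  rcases Fin.eq_zero_or_eq_succ i with rfl | ⟨k, rfl⟩
  · rw [h0 _ _ (hB' 0) (hB 0), B.repr_self, Finsupp.single_eq_same]
    exact one_pos
  obtain ⟨b, hb, hb0, hperp_span, hnn⟩ := hhalf k
  have hperp : ∀ j < k.succ, ∀ v ∈ G j, ⟪b, v⟫ = 0 := fun j hj v hv =>
    hperp_span v (subset_span (hmono (Fin.le_castSucc_iff.2 hj) hv))
  exact B.repr_pos_of_inner_pos (hmem _) (fun j hj => hperp j hj _ (hB j))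
    (inner_pos_of_flag hmono hdim hb hb0 hperp hnn hB B.linearIndependent)
    (inner_pos_of_flag hmono hdim hb hb0 hperp hnn hB' B'.linearIndependent)

end Flag

theorem EuclideanSpace.det_of_apply_eq_basisFun_det {ι : Type*} [Fintype ι] [DecidableEq ι]
    (v : ι → EuclideanSpace ℝ ι) :
    (Matrix.of fun i j => v i j).det = (EuclideanSpace.basisFun ι ℝ).toBasis.det v := by
  rw [Module.Basis.det_apply, ← Matrix.det_transpose]
  rfl

theorem det_sign_determined_by_flag_general
    (d : ℕ) (G : Fin (d + 1) → Set (EuclideanSpace ℝ (Fin (d + 1))))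
    (hmono : ∀ k l : Fin (d + 1), k ≤ l → G k ⊆ G l)
    (h0 : ∀ v w, v ∈ G 0 → w ∈ G 0 → v = w)
    (hdim : ∀ k : Fin (d + 1),
      Module.finrank ℝ (Submodule.span ℝ (G k)) = (k : ℕ) + 1)
    (hhalf : ∀ k : Fin d, ∃ b : EuclideanSpace ℝ (Fin (d + 1)),
      b ∈ Submodule.span ℝ (G k.succ) ∧ b ≠ 0 ∧
      (∀ y ∈ Submodule.span ℝ (G k.castSucc), ⟪b, y⟫ = 0) ∧
      (∀ v ∈ G k.succ, 0 ≤ ⟪b, v⟫))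
    (x x' : Fin (d + 1) → EuclideanSpace ℝ (Fin (d + 1)))
    (hx : ∀ i, x i ∈ G i) (hx' : ∀ i, x' i ∈ G i)
    (hli : LinearIndependent ℝ x) (hli' : LinearIndependent ℝ x') :
    0 < Matrix.det (Matrix.of fun i j => x i j) *
        Matrix.det (Matrix.of fun i j => x' i j) := by
  have hcard : Fintype.card (Fin (d + 1)) = Module.finrank ℝ (EuclideanSpace ℝ (Fin (d + 1))) :=
    by simp
  obtain ⟨B, rfl⟩ : ∃ B : Module.Basis _ ℝ _, ⇑B = x :=
    ⟨_, coe_basisOfLinearIndependentOfCardEqFinrank hli hcard⟩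
  obtain ⟨B', rfl⟩ : ∃ B' : Module.Basis _ ℝ _, ⇑B' = x' :=
    ⟨_, coe_basisOfLinearIndependentOfCardEqFinrank hli' hcard⟩
  have hdet : 0 < B.det B' := B.det_pos_of_flag hmono h0 hdim hhalf B' hx hx'
  set e := (EuclideanSpace.basisFun (Fin (d + 1)) ℝ).toBasis
  rw [EuclideanSpace.det_of_apply_eq_basisFun_det, EuclideanSpace.det_of_apply_eq_basisFun_det,
    ← e.det_mul_det B B', ← mul_assoc]
  exact mul_pos (mul_self_pos.2 (e.isUnit_det B).ne_zero) hdet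

/-- **The sign of the determinant of a transversal of a complete flag of spherical faces is
determined by the flag.**  Let `G₀ ⊆ G₁ ⊆ … ⊆ G_d` be subsets of `S^d ⊂ ℝ^(d+1)`, with `G₀`
a single point, each `Gₖ` spanning a `(k+1)`-dimensional subspace `Lₖ`, and each `Gₖ`
(`k ≥ 1`) lying in a closed halfspace of `Lₖ` bounded by `L_{k−1}` (witnessed by a vector
`b ∈ Lₖ`, `b ⊥ L_{k−1}`, `⟪b, ·⟫ ≥ 0` on `Gₖ`).  Then any two linearly independent
transversals `(x₀,…,x_d)` and `(x′₀,…,x′_d)` with `xᵢ, x′ᵢ ∈ Gᵢ` have determinants of the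
same non-zero sign. -/
theorem det_sign_determined_by_flag
    (d : ℕ) (G : Fin (d + 1) → Set (EuclideanSpace ℝ (Fin (d + 1))))
    (hmono : ∀ k l : Fin (d + 1), k ≤ l → G k ⊆ G l)
    (hsph : ∀ k, G k ⊆ Metric.sphere 0 1)
    (h0 : ∀ v w, v ∈ G 0 → w ∈ G 0 → v = w)
    (hdim : ∀ k : Fin (d + 1),
      Module.finrank ℝ (Submodule.span ℝ (G k)) = (k : ℕ) + 1)
    (hhalf : ∀ k : Fin d, ∃ b : EuclideanSpace ℝ (Fin (d + 1)),
      b ∈ Submodule.span ℝ (G k.succ) ∧ b ≠ 0 ∧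
      (∀ y ∈ Submodule.span ℝ (G k.castSucc), ⟪b, y⟫ = 0) ∧
      (∀ v ∈ G k.succ, 0 ≤ ⟪b, v⟫))
    (x x' : Fin (d + 1) → EuclideanSpace ℝ (Fin (d + 1)))
    (hx : ∀ i, x i ∈ G i) (hx' : ∀ i, x' i ∈ G i)
    (hli : LinearIndependent ℝ x) (hli' : LinearIndependent ℝ x') :
    0 < Matrix.det (Matrix.of fun i j => x i j) *
        Matrix.det (Matrix.of fun i j => x' i j) :=
  det_sign_determined_by_flag_general d G hmono h0 hdim hhalf x x' hx hx' hli hli'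
end

section
/- A pair (P₁,P₂) of non-empty disjoint open convex subsets of ℝ^d satisfies closure(P₁) ∪ closure(P₂) = ℝ^d if and only if there exist a ∈ ℝ^d, a ≠ 0, and b ∈ ℝ with P₁ = {x : a·x < b} and P₂ = {x : a·x > b} (or with the roles of P₁, P₂ swapped). -/
open scoped RealInnerProductSpace

/-!
Separate `P₁` and `P₂` by a hyperplane `f = u`. The open half-space `{f < u}` misses `closure P₂`,
so the covering hypothesis puts it inside `closure P₁`; since `P₁` is open and convex, the interior
of its closure is `P₁` itself, whence `{f < u} = P₁`, and symmetrically `{u < f} = P₂`.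
Conversely, a nonzero functional is an open map, so the closures of the two open half-spaces are
the closed half-spaces, which cover the space.
-/

open Set

section TopologicalVectorSpace

variable {E : Type*} [AddCommGroup E] [TopologicalSpace E] [IsTopologicalAddGroup E]
  [Module ℝ E] [ContinuousSMul ℝ E]

theorem Convex.subset_of_isOpen_of_subset_closure {s U : Set E} (hs : Convex ℝ s)
    (hso : IsOpen s) (hU : IsOpen U) (hUs : U ⊆ closure s) : U ⊆ s := by
  rcases s.eq_empty_or_nonempty with rfl | hne
  · simpa using hUs
  calc U ⊆ interior (closure s) := interior_maximal hUs hU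
    _ = s := by
      rw [hs.interior_closure_eq_interior_of_nonempty_interior (by rwa [hso.interior_eq]),
        hso.interior_eq]

theorem Convex.eq_of_closure_union_eq_univ {s t U : Set E} (hs : Convex ℝ s) (hso : IsOpen s)
    (hst : closure s ∪ closure t = univ) (hU : IsOpen U) (hsU : s ⊆ U) (hUt : Disjoint U t) :
    s = U := by
  refine hsU.antisymm (hs.subset_of_isOpen_of_subset_closure hso hU fun x hx ↦ ?_)
  have hxt : x ∉ closure t := disjoint_left.1 (hUt.closure_right hU) hx
  exact (eq_univ_iff_forall.1 hst x).resolve_right hxt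

theorem exists_halfspaces_of_closure_union_eq_univ {s t : Set E} (hsne : s.Nonempty)
    (htne : t.Nonempty) (hso : IsOpen s) (hto : IsOpen t) (hsc : Convex ℝ s) (htc : Convex ℝ t)
    (hst : Disjoint s t) (hcover : closure s ∪ closure t = univ) :
    ∃ (f : StrongDual ℝ E) (u : ℝ), f ≠ 0 ∧ s = {x | f x < u} ∧ t = {x | u < f x} := by
  obtain ⟨f, u, hfs, hft⟩ := geometric_hahn_banach_open_open hsc hso htc hto hst
  have hs : s = {x | f x < u} :=
    hsc.eq_of_closure_union_eq_univ hso hcover (isOpen_lt f.continuous continuous_const) hfs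
      (disjoint_left.2 fun x hx hxt ↦ (hft x hxt).not_gt hx)
  have ht : t = {x | u < f x} :=
    htc.eq_of_closure_union_eq_univ hto (union_comm _ _ ▸ hcover)
      (isOpen_lt continuous_const f.continuous) hft
      (disjoint_left.2 fun x hx hxs ↦ (hfs x hxs).not_gt hx)
  refine ⟨f, u, ?_, hs, ht⟩
  rintro rfl
  obtain ⟨x, hx⟩ := hsne
  obtain ⟨y, hy⟩ := htne
  exact lt_irrefl (0 : ℝ) ((hfs x hx).trans (hft y hy))

theorem StrongDual.closure_setOf_lt_union_closure_setOf_gt {f : StrongDual ℝ E} (hf : f ≠ 0)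
    (u : ℝ) : closure {x | f x < u} ∪ closure {x | u < f x} = univ := by
  have hopen := f.isOpenMap_of_ne_zero hf
  change closure (f ⁻¹' Iio u) ∪ closure (f ⁻¹' Ioi u) = univ
  rw [← hopen.preimage_closure_eq_closure_preimage f.continuous,
    ← hopen.preimage_closure_eq_closure_preimage f.continuous, closure_Iio, closure_Ioi,
    ← preimage_union, Iic_union_Ici, preimage_univ]

end TopologicalVectorSpace

/-- **Characterization of proper convex 2-partitions of `ℝ^d`.**
A pair `(P₁, P₂)` of non-empty disjoint open convex subsets of `ℝ^d` satisfies
`closure P₁ ∪ closure P₂ = ℝ^d` if and only if `P₁` and `P₂` are the two open sides of a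
common affine hyperplane `{x : ⟪a, x⟫ = b}` with `a ≠ 0` (in one of the two orders). -/
theorem two_partition_iff_halfspaces
    (d : ℕ) (P₁ P₂ : Set (EuclideanSpace ℝ (Fin d)))
    (h₁ne : P₁.Nonempty) (h₂ne : P₂.Nonempty)
    (h₁o : IsOpen P₁) (h₂o : IsOpen P₂)
    (h₁c : Convex ℝ P₁) (h₂c : Convex ℝ P₂)
    (hdisj : Disjoint P₁ P₂) :
    closure P₁ ∪ closure P₂ = Set.univ ↔
      ∃ (a : EuclideanSpace ℝ (Fin d)) (b : ℝ), a ≠ 0 ∧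
        ((P₁ = {x | ⟪a, x⟫ < b} ∧ P₂ = {x | b < ⟪a, x⟫}) ∨
         (P₂ = {x | ⟪a, x⟫ < b} ∧ P₁ = {x | b < ⟪a, x⟫})) := by
  let toDual := InnerProductSpace.toDual ℝ (EuclideanSpace ℝ (Fin d))
  constructor
  · intro hcover
    obtain ⟨f, u, hf, rfl, rfl⟩ :=
      exists_halfspaces_of_closure_union_eq_univ h₁ne h₂ne h₁o h₂o h₁c h₂c hdisj hcover
    refine ⟨toDual.symm f, u, by simpa using hf, Or.inl ?_⟩
    simp only [InnerProductSpace.toDual_symm_apply, toDual, and_self]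
  · have hcover (a : EuclideanSpace ℝ (Fin d)) (ha : a ≠ 0) (b : ℝ) :
        closure {x | ⟪a, x⟫ < b} ∪ closure {x | b < ⟪a, x⟫} = univ :=
      StrongDual.closure_setOf_lt_union_closure_setOf_gt (f := toDual a) (by simpa using ha) b
    rintro ⟨a, b, ha, ⟨rfl, rfl⟩ | ⟨rfl, rfl⟩⟩
    · exact hcover a ha b
    · rw [union_comm]
      exact hcover a ha b
end
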